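/- arXiv:1209.1363 — 5 statements merged into one kernel-verified Lean document; each statement's English description precedes it below -/
import Mathlib

section
/- Let (a_n)_{n≥1} be a real sequence with nonnegative Boolean transform, and let (w_n)_{n≥1} be a weakly decreasing real sequence with w_1 ≤ 1. Then every coefficient of the formal power series 1 − (1 + ∑_{n≥1} w_n a_n x^n)/(1 + ∑_{n≥1} a_n x^n) is nonnegative. -/
/-!
Writing `A = 1 + ∑ aₙ xⁿ`, `B = ∑ bₙ xⁿ` and `W = ∑ wₙ aₙ xⁿ`, the Boolean recursion says exactly
`A⁻¹ = 1 - B`, so the series in question is `1 - (1 + W)(1 - B) = B - W + W B`. Its `n`-th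
coefficient is `bₙ - wₙ aₙ + ∑_{0<k<n} w_{n-k} a_{n-k} b_k`; substituting
`aₙ = bₙ + ∑_{0<k<n} a_{n-k} b_k` turns it into
`(1 - wₙ) bₙ + ∑_{0<k<n} (w_{n-k} - wₙ) a_{n-k} b_k`, a sum of nonnegative terms, because the
`aₙ` are nonnegative along with the `bₙ` (by the same recursion) and `wₙ ≤ w_{n-k} ≤ w₁ ≤ 1`.
-/

open PowerSeries Finset

namespace PowerSeries

variable {R : Type*}

noncomputable def mkPos [Semiring R] (f : ℕ → R) : R⟦X⟧ :=
  mk fun i => if i = 0 then 0 else f i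

@[simp]
theorem coeff_mkPos [Semiring R] (f : ℕ → R) (n : ℕ) :
    coeff n (mkPos f) = if n = 0 then 0 else f n :=
  coeff_mk _ _

theorem coeff_mkPos_mul_mkPos [CommSemiring R] (f g : ℕ → R) (n : ℕ) :
    coeff n (mkPos f * mkPos g) = ∑ k ∈ Ico 1 n, f (n - k) * g k := by
  rw [mul_comm, coeff_mul,
    Nat.sum_antidiagonal_eq_sum_range_succ (fun i j => coeff i (mkPos g) * coeff j (mkPos f))]
  symm
  refine sum_subset_zero_on_sdiff (fun k hk => ?_) (fun k hk => ?_) (fun k hk => ?_)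
  · simp only [mem_Ico, mem_range] at hk ⊢; omega
  · simp only [mem_sdiff, mem_Ico, mem_range] at hk
    rcases Nat.eq_zero_or_pos k with rfl | hk0
    · simp
    · simp [show n - k = 0 by omega]
  · simp only [mem_Ico] at hk
    simp [show k ≠ 0 by omega, show n - k ≠ 0 by omega, mul_comm]

theorem inv_one_add_mkPos_of_boolean_transform {K : Type*} [Field K] {a b : ℕ → K}
    (hb : ∀ n, 1 ≤ n → b n = a n - ∑ k ∈ Ico 1 n, a (n - k) * b k) :
    (1 + mkPos a)⁻¹ = 1 - mkPos b := by
  rw [inv_eq_iff_mul_eq_one (by simp [mkPos])]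
  ext n
  rcases Nat.eq_zero_or_pos n with rfl | hn
  · simp [mkPos]
  · rw [show (1 - mkPos b) * (1 + mkPos a) = 1 + mkPos a - mkPos b - mkPos a * mkPos b by ring,
      map_sub, map_sub, map_add, coeff_mkPos_mul_mkPos, coeff_mkPos, coeff_mkPos,
      if_neg (by omega), if_neg (by omega), hb n hn]
    ring

end PowerSeries

section BooleanTransform

variable {R : Type*} [CommRing R] [PartialOrder R] [IsOrderedRing R] {a b w : ℕ → R}

theorem nonneg_of_boolean_transform_nonneg
    (hb : ∀ n, 1 ≤ n → b n = a n - ∑ k ∈ Ico 1 n, a (n - k) * b k)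
    (hb0 : ∀ n, 1 ≤ n → 0 ≤ b n) (n : ℕ) (hn : 1 ≤ n) : 0 ≤ a n := by
  induction n using Nat.strong_induction_on with
  | _ n ih =>
    have hsum : 0 ≤ ∑ k ∈ Ico 1 n, a (n - k) * b k := by
      refine sum_nonneg fun k hk => ?_
      rw [mem_Ico] at hk
      exact mul_nonneg (ih (n - k) (by omega) (by omega)) (hb0 k hk.1)
    rw [← eq_sub_iff_add_eq.mp (hb n hn)]
    exact add_nonneg (hb0 n hn) hsum

theorem weighted_boolean_coeff_nonneg
    (hb : ∀ n, 1 ≤ n → b n = a n - ∑ k ∈ Ico 1 n, a (n - k) * b k)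
    (hb0 : ∀ n, 1 ≤ n → 0 ≤ b n)
    (hw : ∀ m n, 1 ≤ m → m ≤ n → w n ≤ w m) (hw1 : w 1 ≤ 1) (n : ℕ) (hn : 1 ≤ n) :
    0 ≤ b n - w n * a n + ∑ k ∈ Ico 1 n, w (n - k) * a (n - k) * b k := by
  have hregroup : b n - w n * a n + ∑ k ∈ Ico 1 n, w (n - k) * a (n - k) * b k
      = (1 - w n) * b n + ∑ k ∈ Ico 1 n, (w (n - k) - w n) * (a (n - k) * b k) := by
    rw [← eq_sub_iff_add_eq.mp (hb n hn)]
    simp only [sub_mul, sum_sub_distrib, ← mul_sum, mul_assoc]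
    ring
  rw [hregroup]
  refine add_nonneg (mul_nonneg ?_ (hb0 n hn)) (sum_nonneg fun k hk => ?_)
  · exact sub_nonneg.mpr ((hw 1 n le_rfl hn).trans hw1)
  · rw [mem_Ico] at hk
    exact mul_nonneg (sub_nonneg.mpr (hw (n - k) n (by omega) (by omega)))
      (mul_nonneg (nonneg_of_boolean_transform_nonneg hb hb0 (n - k) (by omega)) (hb0 k hk.1))

end BooleanTransform

/-- If the real sequence `(a n)` has nonnegative Boolean transform
`(b n)`, and `(w n)_{n≥1}` is weakly decreasing with `w 1 ≤ 1`, then every coefficient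
of `1 - (1 + ∑_{n≥1} w n * a n * xⁿ) / (1 + ∑_{n≥1} a n * xⁿ)` in `ℝ[[x]]`
is nonnegative. -/
theorem coeff_nonneg_of_boolean_transform_nonneg (a b w : ℕ → ℝ)
    (hb : ∀ n, 1 ≤ n → b n = a n - ∑ k ∈ Finset.Ico 1 n, a (n - k) * b k)
    (hb0 : ∀ n, 1 ≤ n → 0 ≤ b n)
    (hw : ∀ m n, 1 ≤ m → m ≤ n → w n ≤ w m) (hw1 : w 1 ≤ 1) :
    ∀ n, 0 ≤ PowerSeries.coeff n
      (1 - (1 + PowerSeries.mk fun i => if i = 0 then 0 else w i * a i) *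
        (1 + PowerSeries.mk fun i => if i = 0 then 0 else a i)⁻¹) := by
  intro n
  change 0 ≤ coeff n (1 - (1 + mkPos fun i => w i * a i) * (1 + mkPos a)⁻¹)
  rw [inv_one_add_mkPos_of_boolean_transform hb,
    show ∀ W B : ℝ⟦X⟧, 1 - (1 + W) * (1 - B) = B - W + W * B from fun _ _ => by ring,
    map_add, map_sub, coeff_mkPos_mul_mkPos, coeff_mkPos, coeff_mkPos]
  rcases Nat.eq_zero_or_pos n with rfl | hn
  · simp
  · rw [if_neg (by omega), if_neg (by omega)]
    exact weighted_boolean_coeff_nonneg hb hb0 hw hw1 n hn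
end

section
/- Let (a_n)_{n≥1} be a real sequence with nonnegative Boolean transform. Then a_s · a_t ≤ a_{s+t} for all integers s, t ≥ 1. -/
/-!
Solving the defining recursion for `a` gives `a n = b n + ∑_{1 ≤ k < n} a (n - k) * b k`, so with `b ≥ 0`
an induction shows `a ≥ 0`. Expanding `a t` this way and bounding `a s * a (t - k)` by induction on `t`,
`a s * a t ≤ ∑_{1 ≤ k ≤ t} a (s + t - k) * b k`, which is a partial sum of the expansion of `a (s + t)`
with nonnegative terms.
-/

open Finset

/-- The Boolean transform relation in the subtraction-free form `a = b + a ⋆ b`. -/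
def IsBooleanTransform {R : Type*} [Semiring R] (a b : ℕ → R) : Prop :=
  ∀ n, 1 ≤ n → a n = b n + ∑ k ∈ Ico 1 n, a (n - k) * b k

namespace IsBooleanTransform

theorem of_eq_sub {R : Type*} [Ring R] {a b : ℕ → R}
    (hb : ∀ n, 1 ≤ n → b n = a n - ∑ k ∈ Ico 1 n, a (n - k) * b k) :
    IsBooleanTransform a b :=
  fun n hn => (eq_sub_iff_add_eq.mp (hb n hn)).symm

variable {R : Type*} [CommSemiring R] [PartialOrder R] [IsOrderedRing R] {a b : ℕ → R}

theorem nonneg (h : IsBooleanTransform a b) (hb0 : ∀ n, 1 ≤ n → 0 ≤ b n) :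
    ∀ n, 1 ≤ n → 0 ≤ a n := by
  intro n
  induction n using Nat.strong_induction_on with
  | _ n ih =>
    intro hn
    rw [h n hn]
    refine add_nonneg (hb0 n hn) (sum_nonneg fun k hk => ?_)
    rw [mem_Ico] at hk
    exact mul_nonneg (ih (n - k) (by omega) (by omega)) (hb0 k hk.1)

theorem sum_Ico_le (h : IsBooleanTransform a b) (hb0 : ∀ n, 1 ≤ n → 0 ≤ b n)
    {s : ℕ} (hs : 1 ≤ s) (t : ℕ) :
    ∑ k ∈ Ico 1 (t + 1), a (s + t - k) * b k ≤ a (s + t) := by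
  have ha0 := h.nonneg hb0
  calc ∑ k ∈ Ico 1 (t + 1), a (s + t - k) * b k
      ≤ ∑ k ∈ Ico 1 (s + t), a (s + t - k) * b k :=
        sum_le_sum_of_subset_of_nonneg (Ico_subset_Ico le_rfl (by omega)) fun k hk _ => by
          rw [mem_Ico] at hk
          exact mul_nonneg (ha0 _ (by omega)) (hb0 k hk.1)
    _ ≤ b (s + t) + ∑ k ∈ Ico 1 (s + t), a (s + t - k) * b k :=
        le_add_of_nonneg_left (hb0 _ (by omega))
    _ = a (s + t) := (h _ (by omega)).symm

theorem mul_le_apply_add (h : IsBooleanTransform a b) (hb0 : ∀ n, 1 ≤ n → 0 ≤ b n)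
    {s t : ℕ} (hs : 1 ≤ s) (ht : 1 ≤ t) : a s * a t ≤ a (s + t) := by
  induction t using Nat.strong_induction_on with
  | _ t ih =>
    have hterm : ∀ k ∈ Ico 1 t, a s * (a (t - k) * b k) ≤ a (s + t - k) * b k := by
      intro k hk
      rw [mem_Ico] at hk
      rw [← mul_assoc, show s + t - k = s + (t - k) by omega]
      exact mul_le_mul_of_nonneg_right (ih (t - k) (by omega) (by omega)) (hb0 k hk.1)
    calc a s * a t
        = a s * b t + ∑ k ∈ Ico 1 t, a s * (a (t - k) * b k) := by
          rw [h t ht, mul_add, mul_sum]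
      _ ≤ a (s + t - t) * b t + ∑ k ∈ Ico 1 t, a (s + t - k) * b k := by
          rw [Nat.add_sub_cancel]
          exact add_le_add_right (sum_le_sum hterm) _
      _ = ∑ k ∈ Ico 1 (t + 1), a (s + t - k) * b k := by
          rw [sum_Ico_succ_top ht, add_comm]
      _ ≤ a (s + t) := h.sum_Ico_le hb0 hs t

end IsBooleanTransform

/-- If the real sequence `(a n)` has nonnegative Boolean transform
`(b n)`, then `a s * a t ≤ a (s + t)` for all `s, t ≥ 1`. -/
theorem submultiplicative_of_boolean_transform_nonneg (a b : ℕ → ℝ)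
    (hb : ∀ n, 1 ≤ n → b n = a n - ∑ k ∈ Finset.Ico 1 n, a (n - k) * b k)
    (hb0 : ∀ n, 1 ≤ n → 0 ≤ b n) :
    ∀ s t, 1 ≤ s → 1 ≤ t → a s * a t ≤ a (s + t) :=
  fun _ _ hs ht => (IsBooleanTransform.of_eq_sub hb).mul_le_apply_add hb0 hs ht
end

section
/- Let (p_n)_{n≥1} and (q_n)_{n≥1} be real sequences. For a composition γ of n, set r̃_γ := ∑ p_α q_β, the sum over all pairs (α, β) of compositions of n with α ∧ β = γ. Then for all compositions γ ⊨ n and γ' ⊨ n', r̃_{γ·γ'} = r̃_γ · r̃_{γ'}, where γ·γ' is the concatenation, a composition of n + n'. -/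
/-!
If `α ∧ β = γ·γ'` with `γ ⊨ n`, then `n` is a partial sum of `γ·γ'`, hence of both `α` and `β`,
so both split as concatenations `α = α₁·α₂`, `β = β₁·β₂`. Partial sums of a concatenation are those
of the first factor together with those of the second shifted by `n`, so the meet commutes with
concatenation: `α ∧ β = (α₁ ∧ β₁)·(α₂ ∧ β₂)`. Hence concatenation is a bijection between the pairs
indexing `r̃_γ · r̃_{γ'}` and those indexing `r̃_{γ·γ'}`, and the weights `p_α q_β` are
multiplicative under it.
-/

open scoped Classical

/-- Concatenation of compositions: `(α · α') ⊨ n + n'` for `α ⊨ n`, `α' ⊨ n'`. -/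
def Composition.cat {n n' : ℕ} (α : Composition n) (α' : Composition n') :
    Composition (n + n') where
  blocks := α.blocks ++ α'.blocks
  blocks_pos hi := by
    rcases List.mem_append.1 hi with h | h
    · exact α.blocks_pos h
    · exact α'.blocks_pos h
  blocks_sum := by rw [List.sum_append, α.blocks_sum, α'.blocks_sum]

/-- The meet `α ∧ β` of two compositions of `n`: the composition whose set of
(proper) partial sums is the intersection of those of `α` and `β`. -/
noncomputable def Composition.meet {n : ℕ} (α β : Composition n) : Composition n :=
  (compositionEquiv n).symm
    { boundaries := α.toCompositionAsSet.boundaries ∩ β.toCompositionAsSet.boundaries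
      zero_mem := Finset.mem_inter.2
        ⟨α.toCompositionAsSet.zero_mem, β.toCompositionAsSet.zero_mem⟩
      getLast_mem := Finset.mem_inter.2
        ⟨α.toCompositionAsSet.getLast_mem, β.toCompositionAsSet.getLast_mem⟩ }

/-- `r̃_γ := ∑_{α ∧ β = γ} p_α q_β`, the sum over pairs of compositions of `n`
whose meet is `γ`. -/
noncomputable def rTilde (p q : ℕ → ℝ) {n : ℕ} (γ : Composition n) : ℝ :=
  ∑ x : Composition n × Composition n,
    if x.1.meet x.2 = γ then (x.1.blocks.map p).prod * (x.2.blocks.map q).prod else 0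

theorem List.IsPrefix.eq_of_sum_eq {l₁ l₂ : List ℕ} (h : l₁ <+: l₂) (hpos : ∀ x ∈ l₂, 0 < x)
    (hsum : l₁.sum = l₂.sum) : l₁ = l₂ := by
  obtain ⟨t, rfl⟩ := h
  have ht : t.sum = 0 := by simpa [List.sum_append] using hsum
  have : t = [] := List.eq_nil_iff_forall_not_mem.2 fun x hx =>
    (hpos x (List.mem_append_right _ hx)).ne' (List.sum_eq_zero_iff.1 ht x hx)
  simp [this]

namespace Composition

variable {m n n' : ℕ}

@[simp]
theorem cat_blocks (α : Composition n) (α' : Composition n') :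
    (α.cat α').blocks = α.blocks ++ α'.blocks := rfl

theorem prod_map_cat_blocks {M : Type*} [Monoid M] (p : ℕ → M) (α : Composition n)
    (α' : Composition n') :
    ((α.cat α').blocks.map p).prod = (α.blocks.map p).prod * (α'.blocks.map p).prod := by
  simp [List.prod_append]

theorem length_cat (α : Composition n) (α' : Composition n') :
    (α.cat α').length = α.length + α'.length :=
  List.length_append

theorem cat_injective {a b : Composition n} {a' b' : Composition n'}
    (h : a.cat a' = b.cat b') : a = b ∧ a' = b' := by
  have h' : a.blocks ++ a'.blocks = b.blocks ++ b'.blocks := congrArg blocks h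
  have hsum : a.blocks.sum = b.blocks.sum := by rw [a.blocks_sum, b.blocks_sum]
  have hab : a.blocks = b.blocks := by
    rcases List.prefix_or_prefix_of_prefix ⟨a'.blocks, h'⟩ ⟨b'.blocks, rfl⟩ with hp | hp
    · exact hp.eq_of_sum_eq (fun _ => b.blocks_pos) hsum
    · exact (hp.eq_of_sum_eq (fun _ => a.blocks_pos) hsum.symm).symm
  rw [hab] at h'
  exact ⟨Composition.ext hab, Composition.ext (List.append_cancel_left h')⟩

theorem sizeUpTo_cat_of_le (α : Composition n) (α' : Composition n') {i : ℕ}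
    (hi : i ≤ α.length) : (α.cat α').sizeUpTo i = α.sizeUpTo i := by
  simp [sizeUpTo, List.take_append_of_le_length hi]

theorem sizeUpTo_cat_length_add (α : Composition n) (α' : Composition n') (j : ℕ) :
    (α.cat α').sizeUpTo (α.length + j) = n + α'.sizeUpTo j := by
  simp [sizeUpTo, ← blocks_length, List.take_length_add_append, List.sum_append]

/-- The partial sums of `α ⊨ m`, including `0` and `m`: the set `{0} ∪ PS(α) ∪ {m}`. -/
def partialSums (α : Composition m) : Finset ℕ :=
  α.boundaries.map Fin.valEmbedding

theorem mem_partialSums {α : Composition m} {k : ℕ} :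
    k ∈ α.partialSums ↔ ∃ i ≤ α.length, α.sizeUpTo i = k := by
  simp only [partialSums, boundaries, Finset.mem_map, Finset.mem_univ, true_and]
  constructor
  · rintro ⟨_, ⟨i, rfl⟩, rfl⟩
    exact ⟨i, Nat.le_of_lt_succ i.2, rfl⟩
  · rintro ⟨i, hi, rfl⟩
    exact ⟨_, ⟨⟨i, Nat.lt_succ_of_le hi⟩, rfl⟩, rfl⟩

theorem le_of_mem_partialSums {α : Composition m} {k : ℕ} (hk : k ∈ α.partialSums) : k ≤ m := by
  obtain ⟨i, -, rfl⟩ := mem_partialSums.1 hk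
  exact α.sizeUpTo_le i

theorem mem_partialSums_self (α : Composition m) : m ∈ α.partialSums :=
  mem_partialSums.2 ⟨α.length, le_rfl, α.sizeUpTo_length⟩

theorem partialSums_injective : Function.Injective (partialSums (m := m)) := by
  intro α β h
  apply (compositionEquiv m).injective
  ext1
  exact Finset.map_injective _ h

theorem boundaries_meet (α β : Composition m) :
    (α.meet β).boundaries = α.boundaries ∩ β.boundaries :=
  CompositionAsSet.toComposition_boundaries _

theorem partialSums_meet (α β : Composition m) :
    (α.meet β).partialSums = α.partialSums ∩ β.partialSums := by
  rw [partialSums, boundaries_meet, Finset.map_inter]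
  rfl

theorem partialSums_cat (α : Composition n) (α' : Composition n') :
    (α.cat α').partialSums = α.partialSums ∪ α'.partialSums.image (n + ·) := by
  ext k
  simp only [Finset.mem_union, Finset.mem_image, mem_partialSums, length_cat]
  constructor
  · rintro ⟨i, hi, rfl⟩
    rcases le_or_gt i α.length with h | h
    · exact Or.inl ⟨i, h, (sizeUpTo_cat_of_le _ _ h).symm⟩
    · obtain ⟨j, rfl⟩ := Nat.exists_eq_add_of_le h.le
      exact Or.inr ⟨_, ⟨j, by omega, rfl⟩, (sizeUpTo_cat_length_add _ _ j).symm⟩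
  · rintro (⟨i, hi, rfl⟩ | ⟨_, ⟨j, hj, rfl⟩, rfl⟩)
    · exact ⟨i, by omega, sizeUpTo_cat_of_le _ _ hi⟩
    · exact ⟨α.length + j, by omega, sizeUpTo_cat_length_add _ _ j⟩

theorem meet_cat (a b : Composition n) (a' b' : Composition n') :
    (a.cat a').meet (b.cat b') = (a.meet b).cat (a'.meet b') := by
  apply partialSums_injective
  simp only [partialSums_meet, partialSums_cat]
  ext k
  simp only [Finset.mem_inter, Finset.mem_union, Finset.mem_image]
  constructor
  -- a common partial sum taken from different halves is at once `≤ n` and `≥ n`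
  · rintro ⟨hA | ⟨x, hx, rfl⟩, hB | ⟨y, hy, hyk⟩⟩
    · exact Or.inl ⟨hA, hB⟩
    · obtain rfl : k = n := le_antisymm (le_of_mem_partialSums hA) (by omega)
      exact Or.inl ⟨hA, b.mem_partialSums_self⟩
    · have hx0 : n + x = n := le_antisymm (le_of_mem_partialSums hB) (by omega)
      rw [hx0] at hB ⊢
      exact Or.inl ⟨a.mem_partialSums_self, hB⟩
    · obtain rfl : x = y := by omega
      exact Or.inr ⟨x, ⟨hx, hy⟩, rfl⟩
  · rintro (⟨hA, hB⟩ | ⟨x, ⟨hx, hy⟩, rfl⟩)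
    · exact ⟨Or.inl hA, Or.inl hB⟩
    · exact ⟨Or.inr ⟨x, hx, rfl⟩, Or.inr ⟨x, hy, rfl⟩⟩

theorem exists_eq_cat_of_mem_partialSums {α : Composition (n + n')} (h : n ∈ α.partialSums) :
    ∃ (a : Composition n) (a' : Composition n'), α = a.cat a' := by
  obtain ⟨i, -, hi⟩ := mem_partialSums.1 h
  have hdrop : (α.blocks.drop i).sum = n' := by
    have := List.sum_take_add_sum_drop α.blocks i
    rw [α.blocks_sum] at this
    unfold sizeUpTo at hi
    omega
  exact ⟨⟨α.blocks.take i, fun hx => α.blocks_pos (List.mem_of_mem_take hx), hi⟩,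
    ⟨α.blocks.drop i, fun hx => α.blocks_pos (List.mem_of_mem_drop hx), hdrop⟩,
    Composition.ext (List.take_append_drop i α.blocks).symm⟩

theorem exists_cat_of_meet_eq_cat {γ : Composition n} {γ' : Composition n'}
    {α β : Composition (n + n')} (h : α.meet β = γ.cat γ') :
    ∃ (a b : Composition n) (a' b' : Composition n'),
      a.meet b = γ ∧ a'.meet b' = γ' ∧ α = a.cat a' ∧ β = b.cat b' := by
  have hn : n ∈ α.partialSums ∩ β.partialSums := by
    rw [← partialSums_meet, h, partialSums_cat]
    exact Finset.mem_union_left _ γ.mem_partialSums_self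
  obtain ⟨a, a', rfl⟩ := exists_eq_cat_of_mem_partialSums (Finset.mem_inter.1 hn).1
  obtain ⟨b, b', rfl⟩ := exists_eq_cat_of_mem_partialSums (Finset.mem_inter.1 hn).2
  rw [meet_cat] at h
  obtain ⟨hγ, hγ'⟩ := cat_injective h
  exact ⟨a, b, a', b', hγ, hγ', rfl, rfl⟩

end Composition

theorem rTilde_eq_sum_filter (p q : ℕ → ℝ) {n : ℕ} (γ : Composition n) :
    rTilde p q γ = ∑ x : Composition n × Composition n with x.1.meet x.2 = γ,
      (x.1.blocks.map p).prod * (x.2.blocks.map q).prod :=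
  (Finset.sum_filter _ _).symm

/-- `r̃` is multiplicative with respect to concatenation:
`r̃_{γ·γ'} = r̃_γ · r̃_{γ'}`. -/
theorem rTilde_cat (p q : ℕ → ℝ) {n n' : ℕ} (γ : Composition n) (γ' : Composition n') :
    rTilde p q (γ.cat γ') = rTilde p q γ * rTilde p q γ' := by
  rw [rTilde_eq_sum_filter, rTilde_eq_sum_filter, rTilde_eq_sum_filter, Finset.sum_mul_sum,
    ← Finset.sum_product']
  symm
  refine Finset.sum_nbij (fun x => (x.1.1.cat x.2.1, x.1.2.cat x.2.2)) ?_ ?_ ?_ ?_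
  · rintro ⟨⟨a, b⟩, a', b'⟩ hx
    simp only [Finset.mem_product, Finset.mem_filter_univ] at hx ⊢
    rw [Composition.meet_cat, hx.1, hx.2]
  · rintro ⟨⟨a, b⟩, a', b'⟩ - ⟨⟨c, d⟩, c', d'⟩ - h
    obtain ⟨h₁, h₂⟩ := Prod.mk.inj h
    obtain ⟨rfl, rfl⟩ := Composition.cat_injective h₁
    obtain ⟨rfl, rfl⟩ := Composition.cat_injective h₂
    rfl
  · rintro ⟨α, β⟩ h
    rw [Finset.mem_coe, Finset.mem_filter_univ] at h
    obtain ⟨a, b, a', b', hγ, hγ', rfl, rfl⟩ := Composition.exists_cat_of_meet_eq_cat h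
    exact ⟨((a, b), (a', b')), by simp [hγ, hγ'], rfl⟩
  · rintro ⟨⟨a, b⟩, a', b'⟩ -
    simp only [Composition.prod_map_cat_blocks]
    ring
end

section
/- Let k be a field, G a group, and let V and W be finite-dimensional k-vector spaces equipped with representations of G, with W free as a module over the group algebra k[G]. Let U denote V ⊗_k W with the diagonal G-action. Then dim_k (U_G) = (dim_k V) · (dim_k (W_G)), where (−)_G denotes the space of coinvariants, i.e., the quotient of the module by the k-subspace spanned by all elements v − g·v. -/
/-!
A `k[G]`-basis of `W` indexed by `ι` identifies `W` with the free representation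
`ι →₀ k[G]`. Coinvariants commute with direct sums, and `(V ⊗ k[G])_G ≅ V` via
`⟦v ⊗ g⟧ ↦ g⁻¹ v`, so `(V ⊗ W)_G ≅ (ι →₀ V) ≅ V ⊗ (ι →₀ k) ≅ V ⊗ W_G`;
dimensions then multiply.
-/

open TensorProduct

/-- The subspace of `V` spanned by the elements `v - g · v`, whose quotient is the
space of coinvariants of the representation. -/
def Representation.coinvariantsKer {k G V : Type*} [CommSemiring k] [Monoid G]
    [AddCommGroup V] [Module k V] (ρ : Representation k G V) : Submodule k V :=
  Submodule.span k {x : V | ∃ (g : G) (v : V), x = v - ρ g v}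

namespace Representation

section Semiring

variable {k G V W U : Type*} [CommSemiring k] [Monoid G] [AddCommMonoid V] [Module k V]
  [AddCommMonoid W] [Module k W] [AddCommMonoid U] [Module k U]
  {ρ : Representation k G V} {σ : Representation k G W} {τ : Representation k G U}

noncomputable def Equiv.ofAsModule (e : ρ.asModule ≃ₗ[MonoidAlgebra k G] σ.asModule) :
    ρ.Equiv σ :=
  ((IntertwiningMap.equivLinearMapAsModule ρ σ).symm e.toLinearMap).ofBijective e.bijective

noncomputable def equivFreeOfBasis {ι : Type*}
    (b : Module.Basis ι (MonoidAlgebra k G) ρ.asModule) : ρ.Equiv (free k G ι) :=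
  .ofAsModule (b.repr ≪≫ₗ finsuppLEquivFreeAsModule k G ι)

variable (ρ) in
noncomputable def Equiv.lTensor (φ : σ.Equiv τ) : (ρ.tprod σ).Equiv (ρ.tprod τ) :=
  (IntertwiningMap.lTensor ρ φ.toIntertwiningMap).ofBijective
    (φ.toLinearEquiv.lTensor V).bijective

variable (ρ σ) in
/-- `finsuppTensorRight`, which forces `α` into the universe of `W`, for arbitrary `α`. -/
noncomputable def tprodFinsuppEquiv (α : Type*) [DecidableEq α] :
    (ρ.tprod (σ.finsupp α)).Equiv ((ρ.tprod σ).finsupp α) :=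
  .mk (TensorProduct.finsuppRight k k V W α) fun g ↦ by
    ext; simp [TensorProduct.finsuppRight_apply_tmul]

end Semiring

variable {k G V W : Type*} [CommRing k] [AddCommGroup V] [Module k V] [AddCommGroup W]
  [Module k W]

section Monoid

variable [Monoid G]

theorem coinvariantsKer_eq_ker (ρ : Representation k G V) :
    ρ.coinvariantsKer = Coinvariants.ker ρ := by
  refine le_antisymm (Submodule.span_le.2 ?_) (Submodule.span_le.2 ?_)
  · rintro _ ⟨g, v, rfl⟩
    exact neg_sub (ρ g v) v ▸ neg_mem (Coinvariants.sub_mem_ker g v)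
  · rintro _ ⟨⟨g, v⟩, rfl⟩
    dsimp only
    exact neg_sub v (ρ g v) ▸ neg_mem (Submodule.subset_span ⟨g, v, rfl⟩)

noncomputable def Equiv.coinvariantsCongr {ρ : Representation k G V}
    {σ : Representation k G W} (φ : ρ.Equiv σ) : ρ.Coinvariants ≃ₗ[k] σ.Coinvariants :=
  .ofLinearMap (Coinvariants.map ρ σ φ.toIntertwiningMap)
    (Coinvariants.map σ ρ φ.symm.toIntertwiningMap)
    (Coinvariants.hom_ext <| LinearMap.ext fun x => by simp)
    (Coinvariants.hom_ext <| LinearMap.ext fun x => by simp)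

end Monoid

variable [Group G] (ρ : Representation k G V) (α : Type*) [DecidableEq α]

noncomputable def coinvariantsTprodFreeLEquiv :
    (ρ.tprod (free k G α)).Coinvariants ≃ₗ[k] (α →₀ V) :=
  (tprodFinsuppEquiv ρ (leftRegular k G) α).coinvariantsCongr ≪≫ₗ
    coinvariantsFinsuppLEquiv _ α ≪≫ₗ
    Finsupp.mapRange.linearEquiv (coinvariantsTprodLeftRegularLEquiv ρ)

noncomputable def coinvariantsFreeLEquiv : (free k G α).Coinvariants ≃ₗ[k] (α →₀ k) :=
  (TensorProduct.lid k (free k G α)).symm.coinvariantsCongr ≪≫ₗ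
    coinvariantsTprodFreeLEquiv (trivial k G k) α

noncomputable def coinvariantsTprodLEquivOfFree (σ : Representation k G W)
    [Module.Free (MonoidAlgebra k G) σ.asModule] :
    (ρ.tprod σ).Coinvariants ≃ₗ[k] V ⊗[k] σ.Coinvariants := by
  classical
  let φ := equivFreeOfBasis (Module.Free.chooseBasis (MonoidAlgebra k G) σ.asModule)
  exact (φ.lTensor ρ).coinvariantsCongr ≪≫ₗ coinvariantsTprodFreeLEquiv ρ _ ≪≫ₗ
    (finsuppScalarRight k k V _).symm ≪≫ₗ
    ((φ.coinvariantsCongr ≪≫ₗ coinvariantsFreeLEquiv _).lTensor V).symm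

end Representation

theorem finrank_coinvariants_tensor_general (k G V W : Type*) [Field k] [Group G]
    [AddCommGroup V] [Module k V] [AddCommGroup W] [Module k W]
    (ρV : Representation k G V) (ρW : Representation k G W)
    (hW : Module.Free (MonoidAlgebra k G) ρW.asModule) :
    Module.finrank k ((V ⊗[k] W) ⧸ (ρV.tprod ρW).coinvariantsKer)
      = Module.finrank k V * Module.finrank k (W ⧸ ρW.coinvariantsKer) := by
  rw [Representation.coinvariantsKer_eq_ker, Representation.coinvariantsKer_eq_ker]
  exact (ρV.coinvariantsTprodLEquivOfFree ρW).finrank_eq.trans Module.finrank_tensorProduct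

/-- Let `V`, `W` be finite-dimensional `k`-vector spaces with
representations of a group `G`, with `W` free over the group algebra `k[G]`.
Let `U = V ⊗ W` with the diagonal action. Then
`dim (U_G) = (dim V) * (dim (W_G))`, where `(−)_G` is the space of coinvariants. -/
theorem finrank_coinvariants_tensor (k G V W : Type*) [Field k] [Group G]
    [AddCommGroup V] [Module k V] [AddCommGroup W] [Module k W]
    [FiniteDimensional k V] [FiniteDimensional k W]
    (ρV : Representation k G V) (ρW : Representation k G W)
    (hW : Module.Free (MonoidAlgebra k G) ρW.asModule) :
    Module.finrank k ((V ⊗[k] W) ⧸ (ρV.tprod ρW).coinvariantsKer)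
      = Module.finrank k V * Module.finrank k (W ⧸ ρW.coinvariantsKer) :=
  finrank_coinvariants_tensor_general k G V W ρV ρW hW
end

section
/- Call a partition X of the set {1, …, n} atomic if there is no i with 1 ≤ i < n such that {1, …, i} is a union of blocks of X. For each k ≥ 1 let d_k denote the number of atomic partitions of {1, …, k}, and let B_n denote the Bell number, the total number of partitions of {1, …, n}. Then for every n ≥ 1, B_n = ∑_{α ⊨ n} d_α, where the sum is over all compositions α = (n_1, …, n_k) of n and d_α := d_{n_1} ⋯ d_{n_k}. -/
/-- A partition `P` of the `n`-element set `Fin n` is atomic if there is no `i` with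
`1 ≤ i < n` such that the initial segment of size `i` is a union of blocks of `P`,
i.e. such that every block lies entirely inside or entirely outside that segment. -/
def Finpartition.Atomic {n : ℕ} (P : Finpartition (Finset.univ : Finset (Fin n))) : Prop :=
  ¬ ∃ i, 1 ≤ i ∧ i < n ∧
    ∀ b ∈ P.parts, (∀ x ∈ b, (x : ℕ) < i) ∨ (∀ x ∈ b, ¬ (x : ℕ) < i)

/-- The number of atomic partitions of a `k`-element set. -/
noncomputable def numAtomicPartitions (k : ℕ) : ℕ :=
  Nat.card {P : Finpartition (Finset.univ : Finset (Fin k)) // P.Atomic}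

/-- The Bell number: the total number of partitions of an `n`-element set. -/
noncomputable def bellNumber (n : ℕ) : ℕ :=
  Nat.card (Finpartition (Finset.univ : Finset (Fin n)))

/-!
A partition of `{0, …, n}` is determined by its least cut point `k ≥ 1` (the least `k` such
that `{0, …, k - 1}` is a union of blocks), by its restriction to `{0, …, k - 1}`, which is
atomic, and by an arbitrary partition of the remaining `n + 1 - k` points. Hence
`B (n + 1) = ∑ₖ d k * B (n + 1 - k)`; splitting off the first block of a composition gives the
same recurrence for `∑_{α ⊨ n} d_α`, and both sides equal `1` at `n = 0`.
Partitions are handled as equivalence relations, for which restriction is `Setoid.comap` and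
gluing is a disjoint sum.
-/

open Finset

instance Setoid.instFinite {α : Type*} [Finite α] : Finite (Setoid α) :=
  Finite.of_injective (fun r : Setoid α => ⇑r) fun _ _ h =>
    Setoid.ext fun a b => iff_of_eq (congrFun (congrFun h a) b)

namespace Finpartition

variable {α : Type*} [DecidableEq α]

theorem parts_eq_image_part {s : Finset α} (P : Finpartition s) : P.parts = s.image P.part := by
  ext t
  refine ⟨fun ht => ?_, fun ht => ?_⟩
  · obtain ⟨a, ha⟩ := P.nonempty_of_mem_parts ht
    exact mem_image.2 ⟨a, P.subset ht ha, P.part_eq_of_mem ht ha⟩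
  · obtain ⟨a, ha, rfl⟩ := mem_image.1 ht
    exact P.part_mem.2 ha

theorem ext_of_part_eq {s : Finset α} {P Q : Finpartition s}
    (h : ∀ a ∈ s, P.part a = Q.part a) : P = Q :=
  Finpartition.ext <| by rw [P.parts_eq_image_part, Q.parts_eq_image_part]; exact image_congr h

variable [Fintype α]

open scoped Classical in
noncomputable def equivSetoid : Finpartition (univ : Finset α) ≃ Setoid α where
  toFun P := Setoid.ker P.part
  invFun r := ofSetoid r
  left_inv P := ext_of_part_eq fun a _ => by
    ext b
    rw [mem_part_ofSetoid_iff_rel, Setoid.ker_def, eq_comm,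
      P.mem_part_iff_part_eq_part (mem_univ b) (mem_univ a)]
  right_inv r := Setoid.ext fun a b => by
    rw [Setoid.ker_def, ← mem_part_iff_part_eq_part _ (mem_univ a) (mem_univ b),
      mem_part_ofSetoid_iff_rel]
    exact ⟨r.symm, r.symm⟩

theorem equivSetoid_rel (P : Finpartition (univ : Finset α)) {x y : α} :
    equivSetoid P x y ↔ P.part x = P.part y :=
  Iff.rfl

theorem forall_mem_parts_or_iff_le_ker (P : Finpartition (univ : Finset α)) (p : α → Prop) :
    (∀ b ∈ P.parts, (∀ x ∈ b, p x) ∨ ∀ x ∈ b, ¬ p x) ↔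
      equivSetoid P ≤ Setoid.ker p := by
  refine ⟨fun h x y hxy => ?_, fun h b hb => ?_⟩
  · have hx : x ∈ P.part x := P.mem_part (mem_univ x)
    have hy : y ∈ P.part x := (equivSetoid_rel P).1 hxy ▸ P.mem_part (mem_univ y)
    rcases h _ (P.part_mem.2 (mem_univ x)) with h | h
    · exact propext (iff_of_true (h x hx) (h y hy))
    · exact propext (iff_of_false (h x hx) (h y hy))
  · by_cases hp : ∃ x ∈ b, p x
    · obtain ⟨x, hx, hpx⟩ := hp
      refine .inl fun y hy => ?_
      have : equivSetoid P x y := by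
        rw [equivSetoid_rel, P.part_eq_of_mem hb hx, P.part_eq_of_mem hb hy]
      exact (h this : p x = p y) ▸ hpx
    · push Not at hp
      exact .inr hp

end Finpartition

namespace Setoid

variable {α β : Type*}

theorem comap_symm_le_ker_iff {α β : Type*} (e : α ≃ β) (t : Setoid α) (p : β → Prop) :
    t.comap e.symm ≤ ker p ↔ t ≤ ker (p ∘ e) :=
  ⟨fun h z w hzw => by simpa using h (x := e z) (y := e w) (by simpa [comap_rel] using hzw),
    fun h x y hxy => by simpa using h hxy⟩

def sum (r : Setoid α) (s : Setoid β) : Setoid (α ⊕ β) :=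
  ker (Sum.map (Quotient.mk r) (Quotient.mk s))

variable {r : Setoid α} {s : Setoid β}

@[simp]
theorem sum_inl_inl {a a' : α} : sum r s (.inl a) (.inl a') ↔ r a a' := by
  rw [sum, ker_def]; simp [Quotient.eq]

@[simp]
theorem sum_inr_inr {b b' : β} : sum r s (.inr b) (.inr b') ↔ s b b' := by
  rw [sum, ker_def]; simp [Quotient.eq]

@[simp]
theorem not_sum_inl_inr {a : α} {b : β} : ¬ sum r s (.inl a) (.inr b) := by
  rw [sum, ker_def]; simp

@[simp]
theorem not_sum_inr_inl {a : α} {b : β} : ¬ sum r s (.inr b) (.inl a) := by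
  rw [sum, ker_def]; simp

theorem comap_inl_sum : (sum r s).comap Sum.inl = r :=
  Setoid.ext fun _ _ => by simp [comap_rel]

theorem comap_inr_sum : (sum r s).comap Sum.inr = s :=
  Setoid.ext fun _ _ => by simp [comap_rel]

theorem sum_comap_inl_comap_inr {t : Setoid (α ⊕ β)} (ht : ∀ a b, ¬ t (.inl a) (.inr b)) :
    sum (t.comap .inl) (t.comap .inr) = t :=
  Setoid.ext fun
    | .inl _, .inl _ => by simp [comap_rel]
    | .inr _, .inr _ => by simp [comap_rel]
    | .inl a, .inr b => by simp [ht a b]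
    | .inr b, .inl a => by simpa using fun h => ht a b (t.symm h)

theorem sum_le_ker_iff {p : α ⊕ β → Prop} (hp : ∀ b, ¬ p (.inr b)) :
    sum r s ≤ ker p ↔ r ≤ ker (p ∘ .inl) := by
  refine ⟨fun h a a' haa' => h (sum_inl_inl.2 haa'), fun h => ?_⟩
  rintro (a | b) (a' | b') hrel
  · exact h (sum_inl_inl.1 hrel)
  · exact absurd hrel not_sum_inl_inr
  · exact absurd hrel not_sum_inr_inl
  · exact propext (iff_of_false (hp b) (hp b'))

variable {n : ℕ}

/-- `{0, …, i - 1}` is a union of classes of `r`. -/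
def SplitsAt (r : Setoid (Fin n)) (i : ℕ) : Prop :=
  r ≤ ker fun x : Fin n => (x : ℕ) < i

def IsAtomic (r : Setoid (Fin n)) : Prop :=
  ∀ i, 1 ≤ i → i < n → ¬ r.SplitsAt i

theorem splitsAt_of_le (r : Setoid (Fin n)) {i : ℕ} (h : n ≤ i) : r.SplitsAt i := fun x y _ =>
  propext (iff_of_true (by omega) (by omega))

end Setoid

theorem Finpartition.atomic_iff_isAtomic {n : ℕ} (P : Finpartition (univ : Finset (Fin n))) :
    P.Atomic ↔ (equivSetoid P).IsAtomic := by
  simp only [Finpartition.Atomic, Setoid.IsAtomic, Setoid.SplitsAt,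
    ← forall_mem_parts_or_iff_le_ker, not_exists, not_and]

def Fin.splitEquiv {n : ℕ} (m : Fin (n + 1)) : Fin (m + 1) ⊕ Fin (n - m) ≃ Fin (n + 1) :=
  finSumFinEquiv.trans (finCongr (by omega))

@[simp]
theorem Fin.val_splitEquiv_inl {n : ℕ} (m : Fin (n + 1)) (a : Fin (m + 1)) :
    (Fin.splitEquiv m (.inl a) : ℕ) = a :=
  rfl

@[simp]
theorem Fin.val_splitEquiv_inr {n : ℕ} (m : Fin (n + 1)) (b : Fin (n - m)) :
    (Fin.splitEquiv m (.inr b) : ℕ) = m + 1 + b :=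
  rfl

namespace Setoid

variable {n : ℕ} {m : Fin (n + 1)} {r₁ r₁' : Setoid (Fin (m + 1))}
  {r₂ r₂' : Setoid (Fin (n - m))}

def finAppend (m : Fin (n + 1)) (r₁ : Setoid (Fin (m + 1))) (r₂ : Setoid (Fin (n - m))) :
    Setoid (Fin (n + 1)) :=
  (sum r₁ r₂).comap (Fin.splitEquiv m).symm

theorem comap_finAppend : (finAppend m r₁ r₂).comap (Fin.splitEquiv m) = sum r₁ r₂ :=
  Setoid.ext fun _ _ => by rw [comap_rel, finAppend, comap_rel]; simp

theorem finAppend_inj :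
    finAppend m r₁ r₂ = finAppend m r₁' r₂' ↔ r₁ = r₁' ∧ r₂ = r₂' := by
  refine ⟨fun h => ?_, fun ⟨h₁, h₂⟩ => h₁ ▸ h₂ ▸ rfl⟩
  have h := congrArg (comap (Fin.splitEquiv m)) h
  rw [comap_finAppend, comap_finAppend] at h
  exact ⟨comap_inl_sum.symm.trans ((congrArg (comap Sum.inl) h).trans comap_inl_sum),
    comap_inr_sum.symm.trans ((congrArg (comap Sum.inr) h).trans comap_inr_sum)⟩

theorem splitsAt_finAppend_iff {j : ℕ} (hj : j ≤ m + 1) :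
    (finAppend m r₁ r₂).SplitsAt j ↔ r₁.SplitsAt j := by
  have hinr (b : Fin (n - m)) : ¬ (Fin.splitEquiv m (.inr b) : ℕ) < j := by
    rw [Fin.val_splitEquiv_inr]; omega
  rw [SplitsAt, finAppend, comap_symm_le_ker_iff, sum_le_ker_iff hinr]
  rfl

theorem isLeast_finAppend (h : r₁.IsAtomic) :
    IsLeast {i | 1 ≤ i ∧ (finAppend m r₁ r₂).SplitsAt i} (m + 1) := by
  refine ⟨⟨by omega, (splitsAt_finAppend_iff le_rfl).2 (r₁.splitsAt_of_le le_rfl)⟩, ?_⟩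
  rintro i ⟨hi, hsplit⟩
  by_contra! hlt
  exact h i hi hlt ((splitsAt_finAppend_iff hlt.le).1 hsplit)

theorem finAppend_comap_comap {r : Setoid (Fin (n + 1))} (h : r.SplitsAt (m + 1)) :
    finAppend m (r.comap (Fin.splitEquiv m ∘ .inl))
      (r.comap (Fin.splitEquiv m ∘ .inr)) = r := by
  have hcross : ∀ a b, ¬ (r.comap (Fin.splitEquiv m)) (.inl a) (.inr b) := fun a b hab => by
    have := h hab
    simp only [ker_def, Fin.val_splitEquiv_inl, Fin.val_splitEquiv_inr, eq_iff_iff] at this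
    omega
  rw [finAppend, comap_comp, comap_comp, sum_comap_inl_comap_inr hcross]
  exact Setoid.ext fun _ _ => by simp [comap_rel]

theorem finAppend_bijective (n : ℕ) :
    Function.Bijective fun x : Σ m : Fin (n + 1),
        {r : Setoid (Fin (m + 1)) // r.IsAtomic} × Setoid (Fin (n - m)) =>
      finAppend x.1 x.2.1 x.2.2 := by
  refine ⟨?_, fun r => ?_⟩
  · rintro ⟨m, r₁, r₂⟩ ⟨m', r₁', r₂'⟩ h
    dsimp only at h
    obtain rfl : m = m' := Fin.ext <| Nat.succ_injective <|
      (isLeast_finAppend (r₂ := r₂) r₁.2).unique (h ▸ isLeast_finAppend r₁'.2)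
    obtain ⟨h₁, rfl⟩ := finAppend_inj.1 h
    rw [Subtype.ext h₁]
  · classical
    have hex : ∃ i, 1 ≤ i ∧ r.SplitsAt i := ⟨n + 1, by omega, r.splitsAt_of_le le_rfl⟩
    obtain ⟨hpos, hsplit⟩ := Nat.find_spec hex
    have hle : Nat.find hex ≤ n + 1 := Nat.find_min' hex ⟨by omega, r.splitsAt_of_le le_rfl⟩
    set m : Fin (n + 1) := ⟨Nat.find hex - 1, by omega⟩
    have hm : (m : ℕ) + 1 = Nat.find hex := by simp only [m]; omega
    rw [← hm] at hsplit
    have hr := finAppend_comap_comap hsplit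
    refine ⟨⟨m, ⟨_, fun i hi hlt hi' => ?_⟩, _⟩, hr⟩
    rw [← splitsAt_finAppend_iff hlt.le, hr] at hi'
    exact Nat.find_min hex (by omega) ⟨hi, hi'⟩

theorem card_fin_succ (n : ℕ) :
    Nat.card (Setoid (Fin (n + 1))) = ∑ m : Fin (n + 1),
      Nat.card {r : Setoid (Fin (m + 1)) // r.IsAtomic} * Nat.card (Setoid (Fin (n - m))) := by
  rw [← Nat.card_eq_of_bijective _ (finAppend_bijective n), Nat.card_sigma]
  simp only [Nat.card_prod]

end Setoid

theorem bellNumber_eq_card_setoid (n : ℕ) : bellNumber n = Nat.card (Setoid (Fin n)) :=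
  Nat.card_congr Finpartition.equivSetoid

theorem numAtomicPartitions_eq_card_setoid (n : ℕ) :
    numAtomicPartitions n = Nat.card {r : Setoid (Fin n) // r.IsAtomic} :=
  Nat.card_congr (Finpartition.equivSetoid.subtypeEquiv Finpartition.atomic_iff_isAtomic)

theorem bellNumber_zero : bellNumber 0 = 1 := by
  rw [bellNumber_eq_card_setoid, Nat.card_eq_one_iff_unique]
  exact ⟨⟨fun _ _ => Setoid.ext fun a => a.elim0⟩, ⟨⊥⟩⟩

theorem bellNumber_succ (n : ℕ) :
    bellNumber (n + 1) = ∑ m : Fin (n + 1), numAtomicPartitions (m + 1) * bellNumber (n - m) := by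
  simp only [bellNumber_eq_card_setoid, numAtomicPartitions_eq_card_setoid]
  exact Setoid.card_fin_succ n

namespace Composition

def cons {n : ℕ} (m : Fin (n + 1)) (c : Composition (n - m)) : Composition (n + 1) where
  blocks := (m + 1) :: c.blocks
  blocks_pos h := by
    rcases List.mem_cons.1 h with rfl | h
    · omega
    · exact c.blocks_pos h
  blocks_sum := by simp only [List.sum_cons, c.blocks_sum]; omega

theorem cons_bijective (n : ℕ) :
    Function.Bijective fun x : Σ m : Fin (n + 1), Composition (n - m) => cons x.1 x.2 := by
  refine ⟨?_, fun c => ?_⟩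
  · rintro ⟨m, c⟩ ⟨m', c'⟩ h
    obtain ⟨hm, hc⟩ := List.cons.inj (congrArg blocks h)
    dsimp only at hm hc
    obtain rfl : m = m' := Fin.ext (by omega)
    rw [Composition.ext hc]
  · obtain ⟨a, l, hal⟩ : ∃ a l, c.blocks = a :: l := List.exists_cons_of_ne_nil fun h => by
      have := c.blocks_sum
      simp [h] at this
    have ha : 0 < a := c.blocks_pos (by rw [hal]; exact List.mem_cons_self)
    have hsum : a + l.sum = n + 1 := by rw [← List.sum_cons, ← hal, c.blocks_sum]
    have hl : ∀ {i}, i ∈ l → 0 < i := fun hi => c.blocks_pos (by simp [hal, hi])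
    refine ⟨⟨⟨a - 1, by omega⟩, ⟨l, hl, by dsimp only; omega⟩⟩, ?_⟩
    exact Composition.ext (by simp only [cons, hal, List.cons.injEq, and_true]; omega)

variable {R : Type*} [Semiring R] (f : ℕ → R)

theorem sum_prod_map_blocks_zero : ∑ c : Composition 0, (c.blocks.map f).prod = 1 := by
  have hc : ∀ c : Composition 0, c.blocks = [] := fun c =>
    List.eq_nil_iff_forall_not_mem.2 fun a ha => by
      have := c.blocks_pos ha
      have := List.le_sum_of_mem ha
      have := c.blocks_sum
      omega
  simp [hc, composition_card]

theorem sum_prod_map_blocks_succ (n : ℕ) :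
    ∑ c : Composition (n + 1), (c.blocks.map f).prod =
      ∑ m : Fin (n + 1), f (m + 1) * ∑ c : Composition (n - m), (c.blocks.map f).prod := by
  rw [← Fintype.sum_bijective _ (cons_bijective n) _ _ fun _ => rfl, Fintype.sum_sigma]
  simp only [cons, List.map_cons, List.prod_cons, Finset.mul_sum]

end Composition

theorem bell_eq_sum_compositions_atomic_general (n : ℕ) :
    bellNumber n = ∑ α : Composition n, (α.blocks.map numAtomicPartitions).prod := by
  induction n using Nat.strong_induction_on with
  | _ n ih =>
    cases n with
    | zero => rw [bellNumber_zero, Composition.sum_prod_map_blocks_zero]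
    | succ n =>
      rw [bellNumber_succ, Composition.sum_prod_map_blocks_succ]
      exact Finset.sum_congr rfl fun m _ => by rw [ih (n - m) (by omega)]

/-- `B_n = ∑_{α ⊨ n} d_α`, where `B_n` is the Bell number, `d_k` is
the number of atomic partitions of `{1, …, k}` and the sum is over all compositions
of `n`. -/
theorem bell_eq_sum_compositions_atomic (n : ℕ) (hn : 1 ≤ n) :
    bellNumber n = ∑ α : Composition n, (α.blocks.map numAtomicPartitions).prod :=
  bell_eq_sum_compositions_atomic_general n
end
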